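/- arXiv:2211.12802 — 4 statements merged into one kernel-verified Lean document; each statement's English description precedes it below -/
import Mathlib

section
/- Let x ∈ ℝ^n, 0 < r < 1, and A ⊂ B(x,r). Then |A|/|B(x,r)| ≤ (2 C_I/ω_n) · cap₁(A)/r^{n-1}, where C_I is the constant in the relative isoperimetric inequality, ω_n = |B(0,1)|, |·| denotes Lebesgue measure, and cap₁ is the Sobolev 1-capacity. -/
open MeasureTheory Metric Set Filter ENNReal Topology

noncomputable section

/-- Euclidean space `ℝⁿ`. -/
abbrev En (n : ℕ) : Type := EuclideanSpace ℝ (Fin n)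

variable {n : ℕ}

/-- `g` is the weak (distributional) gradient of `u : ℝⁿ → ℝ` on all of `ℝⁿ`. -/
def IsWeakGrad (u : En n → ℝ) (g : En n → (En n →L[ℝ] ℝ)) : Prop :=
  ∀ φ : En n → ℝ, ContDiff ℝ 1 φ → HasCompactSupport φ →
    ∀ v : En n, ∫ x, u x * fderiv ℝ φ x v = - ∫ x, φ x * g x v

/-- The Sobolev 1-capacity: infimum of `W^{1,1}` norms of functions `u ≥ 1` on a
neighborhood of `A`. -/
def cap1 (A : Set (En n)) : ℝ≥0∞ :=
  sInf { c : ℝ≥0∞ | ∃ u : En n → ℝ, ∃ g : En n → (En n →L[ℝ] ℝ),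
    Integrable u ∧ Integrable (fun x => ‖g x‖) ∧ IsWeakGrad u g ∧
    (∃ V : Set (En n), IsOpen V ∧ A ⊆ V ∧ ∀ x ∈ V, 1 ≤ u x) ∧
    c = ENNReal.ofReal ((∫ x, |u x|) + ∫ x, ‖g x‖) }

/-- A set `U ⊆ ℝⁿ` is 1-finely open. -/
def FinelyOpen1 (U : Set (En n)) : Prop :=
  ∀ x ∈ U, Tendsto (fun r : ℝ => cap1 (Uᶜ ∩ ball x r) / ENNReal.ofReal (r ^ (n - 1)))
    (𝓝[>] 0) (𝓝 0)

/-- The relaxed quasiconformality quotient `K_{f,U}(x,r)`. -/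
def KfU (f : En n → En n) (U : Set (En n)) (x : En n) (r : ℝ) : ℝ≥0∞ :=
  if volume (f '' ball x r) = 0 then ∞
  else (EMetric.diam (f '' (ball x r ∩ U)) ^ n / volume (f '' ball x r)) ^ (((n : ℝ) - 1)⁻¹)

/-- Fine quasiconformal dilatation `K_f^fine(x)`. -/
def Kfine (f : En n → En n) (x : En n) : ℝ≥0∞ :=
  ⨅ (U : Set (En n)) (_ : FinelyOpen1 U) (_ : x ∈ U),
    Filter.limsup (fun r => KfU f U x r) (𝓝[>] 0)

/-- Metric quasiconformal dilatation `K_f(x)`. -/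
def Kmetric (f : En n → En n) (x : En n) : ℝ≥0∞ :=
  Filter.limsup (fun r => KfU f univ x r) (𝓝[>] 0)

/-- Volume derivative (Jacobian) `J_f(x)`. -/
def Jvol (f : En n → En n) (x : En n) : ℝ≥0∞ :=
  Filter.limsup (fun r => volume (f '' ball x r) / volume (ball x r)) (𝓝[>] 0)

/-- `g` is the weak gradient of the mapping `f : ℝⁿ → ℝⁿ` on the open set `Ω`. -/
def HasWeakGradOn (f : En n → En n) (g : En n → (En n →L[ℝ] En n)) (Ω : Set (En n)) : Prop :=
  ∀ φ : En n → ℝ, ContDiff ℝ 1 φ → HasCompactSupport φ → tsupport φ ⊆ Ω →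
    ∀ v : En n, ∫ x in Ω, (fderiv ℝ φ x v) • f x = - ∫ x in Ω, φ x • g x v

/-- The precise representative `f*` (componentwise limsup of ball averages). -/
def precise (f : En n → En n) (x : En n) : En n :=
  (EuclideanSpace.equiv (Fin n) ℝ).symm
    (fun i => Filter.limsup (fun r => ⨍ y in ball x r, f y i) (𝓝[>] 0))

/-- Centered Hardy–Littlewood maximal function of `u : ℝⁿ → ℝ`. -/
def maxFn (u : En n → ℝ) (x : En n) : ℝ≥0∞ :=
  ⨆ (r : ℝ) (_ : 0 < r), (volume (ball x r))⁻¹ * ∫⁻ y in ball x r, ‖u y‖₊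

/-- Centered Hardy–Littlewood maximal function of `ρ : ℝⁿ → ℝ≥0∞`. -/
def maxFn' (ρ : En n → ℝ≥0∞) (x : En n) : ℝ≥0∞ :=
  ⨆ (r : ℝ) (_ : 0 < r), (volume (ball x r))⁻¹ * ∫⁻ y in ball x r, ρ y

/-!
Mollify a test function `u` for `cap₁(A)` at a scale `ε` and cut it off outside a neighbourhood
of the unit ball around `x`. If `u ≥ 1` on the `ε`-neighbourhood of `A`, this gives a compactly
supported `C¹` function that is `≥ 1` on `A` and whose gradient has `L¹` norm at most a constant
times `‖u‖_{W^{1,1}}`, so the Gagliardo–Nirenberg–Sobolev inequality yields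
`|A| ≤ (C cap₁(A))^{n/(n-1)}`; the sets whose `ε`-neighbourhoods lie in the open set `{u ≥ 1}`
exhaust `A`. When `cap₁(A) ≤ r^{n-1}` the right-hand side is at most `C^{n/(n-1)} r cap₁(A)`;
otherwise the trivial bound `|A| ≤ ω_n r^n ≤ ω_n r cap₁(A)` applies.
-/

open scoped NNReal Convolution
open ContinuousLinearMap

section Mollifier

lemma abs_convolution_le_of_abs_le {G : Type*} [AddGroup G] [MeasurableSpace G] {μ : Measure G}
    {a b ρ : G → ℝ} {z : G} (hρ : 0 ≤ ρ) (hab : ∀ t, |a t| ≤ b t)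
    (hb : ConvolutionExistsAt b ρ z (lsmul ℝ ℝ) μ) :
    |(a ⋆[lsmul ℝ ℝ, μ] ρ) z| ≤ (b ⋆[lsmul ℝ ℝ, μ] ρ) z := by
  simp only [convolution_def, lsmul_apply, smul_eq_mul]
  calc |∫ t, a t * ρ (z - t) ∂μ| ≤ ∫ t, |a t * ρ (z - t)| ∂μ :=
        abs_integral_le_integral_abs
    _ ≤ ∫ t, b t * ρ (z - t) ∂μ := by
        refine integral_mono_of_nonneg (.of_forall fun t => abs_nonneg _) hb
          (.of_forall fun t => ?_)
        dsimp only
        rw [abs_mul, abs_of_nonneg (hρ _)]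
        exact mul_le_mul_of_nonneg_right (hab t) (hρ _)

variable {E : Type*} [NormedAddCommGroup E] [NormedSpace ℝ E] [FiniteDimensional ℝ E]
  [MeasurableSpace E] [BorelSpace E] {μ : Measure E} [μ.IsAddHaarMeasure]

lemma one_le_convolution_normed (φ : ContDiffBump (0 : E)) {u : E → ℝ} {y : E}
    (hu : ∀ t ∈ ball y φ.rOut, 1 ≤ u t)
    (hex : ConvolutionExistsAt u (φ.normed μ) y (lsmul ℝ ℝ) μ) :
    1 ≤ (u ⋆[lsmul ℝ ℝ, μ] φ.normed μ) y := by
  rw [← φ.integral_normed (μ := μ), ← integral_sub_left_eq_self _ μ y]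
  refine integral_mono (φ.integrable_normed.comp_sub_left y) hex fun t => ?_
  show φ.normed μ (y - t) ≤ u t * φ.normed μ (y - t)
  rcases (φ.nonneg_normed (y - t)).eq_or_lt with h | h
  · rw [← h, mul_zero]
  · have ht : y - t ∈ Function.support (φ.normed μ) := h.ne'
    rw [φ.support_normed_eq, mem_ball_zero_iff, ← dist_eq_norm, dist_comm] at ht
    exact le_mul_of_one_le_left h.le (hu t ht)

lemma lintegral_enorm_le_of_le_convolution_normed {F : Type*} [NormedAddCommGroup F]
    (φ : ContDiffBump (0 : E)) {f : E → F} {h : E → ℝ} (hh : Integrable h μ) (h0 : 0 ≤ h)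
    (hf : ∀ z, ‖f z‖ ≤ (h ⋆[lsmul ℝ ℝ, μ] φ.normed μ) z) :
    ∫⁻ z, ‖f z‖ₑ ∂μ ≤ ENNReal.ofReal (∫ z, h z ∂μ) := by
  have hconv_nonneg : 0 ≤ h ⋆[lsmul ℝ ℝ, μ] φ.normed μ := fun z =>
    integral_nonneg fun t => mul_nonneg (h0 t) (φ.nonneg_normed _)
  calc ∫⁻ z, ‖f z‖ₑ ∂μ ≤ ∫⁻ z, ENNReal.ofReal ((h ⋆[lsmul ℝ ℝ, μ] φ.normed μ) z) ∂μ :=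
        lintegral_mono fun z => by rw [← ofReal_norm]; exact ENNReal.ofReal_le_ofReal (hf z)
    _ = ENNReal.ofReal (∫ z, (h ⋆[lsmul ℝ ℝ, μ] φ.normed μ) z ∂μ) :=
        (ofReal_integral_eq_lintegral_ofReal (hh.integrable_convolution _ φ.integrable_normed)
          (.of_forall hconv_nonneg)).symm
    _ = ENNReal.ofReal (∫ z, h z ∂μ) := by
        rw [integral_convolution _ hh φ.integrable_normed, φ.integral_normed, lsmul_apply,
          smul_eq_mul, mul_one]

end Mollifier

section WeakGradient

variable {u : En n → ℝ} {g : En n → (En n →L[ℝ] ℝ)} {ρ : En n → ℝ}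

lemma IsWeakGrad.fderiv_convolution_apply (hw : IsWeakGrad u g) (hu : LocallyIntegrable u)
    (hρ : ContDiff ℝ 1 ρ) (hρc : HasCompactSupport ρ) (z v : En n) :
    fderiv ℝ (u ⋆[lsmul ℝ ℝ] ρ) z v = ((fun t => g t v) ⋆[lsmul ℝ ℝ] ρ) z := by
  have hDφ (y : En n) : fderiv ℝ (fun y => ρ (z - y)) y = -fderiv ℝ ρ (z - y) := by
    refine (((hρ.differentiable one_ne_zero) _).hasFDerivAt.comp y
      ((hasFDerivAt_id y).const_sub z)).fderiv.trans ?_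
    ext
    simp
  have hweak := hw (fun y => ρ (z - y)) (hρ.comp (contDiff_const.sub contDiff_id))
    (hρc.comp_homeomorph (Homeomorph.subLeft z)) v
  simp only [hDφ, neg_apply, mul_neg, integral_neg, neg_inj] at hweak
  rw [(hρc.hasFDerivAt_convolution_right _ hu hρ z).fderiv,
    convolution_precompR_apply _ hu (hρc.fderiv ℝ) (hρ.continuous_fderiv one_ne_zero)]
  simp only [convolution_def, lsmul_apply, smul_eq_mul]
  rw [hweak]
  simp_rw [mul_comm]

lemma IsWeakGrad.norm_fderiv_convolution_le (hw : IsWeakGrad u g) (hu : LocallyIntegrable u)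
    (hg : LocallyIntegrable fun t => ‖g t‖) (hρ : ContDiff ℝ 1 ρ) (hρc : HasCompactSupport ρ)
    (hρ0 : 0 ≤ ρ) (z : En n) :
    ‖fderiv ℝ (u ⋆[lsmul ℝ ℝ] ρ) z‖ ≤ ((fun t => ‖g t‖) ⋆[lsmul ℝ ℝ] ρ) z := by
  refine opNorm_le_bound _ (integral_nonneg fun t => mul_nonneg (norm_nonneg _) (hρ0 _)) fun v => ?_
  have hex := hρc.convolutionExists_right (lsmul ℝ ℝ) (hg.smul ‖v‖) hρ.continuous z
  rw [hw.fderiv_convolution_apply hu hρ hρc, Real.norm_eq_abs, mul_comm, ← smul_eq_mul,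
    ← Pi.smul_apply, ← smul_convolution]
  exact abs_convolution_le_of_abs_le hρ0 (fun t => by
    simpa [mul_comm] using (g t).le_opNorm v) hex

end WeakGradient

section Sobolev

variable {E : Type*} [NormedAddCommGroup E] [NormedSpace ℝ E]

lemma norm_fderiv_mul_le {v χ : E → ℝ} {z : E} {K : ℝ} (hv : DifferentiableAt ℝ v z)
    (hχ : DifferentiableAt ℝ χ z) (hχ1 : |χ z| ≤ 1) (hχK : ‖fderiv ℝ χ z‖ ≤ K) :
    ‖fderiv ℝ (v * χ) z‖ ≤ K * |v z| + ‖fderiv ℝ v z‖ := by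
  rw [fderiv_mul hv hχ]
  calc _ ≤ ‖v z • fderiv ℝ χ z‖ + ‖χ z • fderiv ℝ v z‖ := norm_add_le _ _
    _ ≤ |v z| * K + 1 * ‖fderiv ℝ v z‖ := by
        rw [norm_smul, norm_smul, Real.norm_eq_abs, Real.norm_eq_abs]
        gcongr
    _ = K * |v z| + ‖fderiv ℝ v z‖ := by ring

lemma exists_cutoff_ball_one [FiniteDimensional ℝ E] :
    ∃ K : ℝ, ∀ x₀ : E, ∃ χ : E → ℝ, ContDiff ℝ 1 χ ∧ HasCompactSupport χ ∧
      (∀ y ∈ ball x₀ 1, χ y = 1) ∧ (∀ y, |χ y| ≤ 1) ∧ ∀ y, ‖fderiv ℝ χ y‖ ≤ K := by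
  let ψ : ContDiffBump (0 : E) := ⟨1, 2, one_pos, one_lt_two⟩
  obtain ⟨K, hK⟩ := (ψ.contDiff.continuous_fderiv one_ne_zero).bounded_above_of_compact_support
    (ψ.hasCompactSupport.fderiv ℝ)
  refine ⟨K, fun x₀ => ⟨fun y => ψ (y - x₀), ψ.contDiff.comp (contDiff_id.sub contDiff_const),
    ψ.hasCompactSupport.comp_homeomorph (Homeomorph.subRight x₀), fun y hy => ?_,
    fun y => ?_, fun y => ?_⟩⟩
  · exact ψ.one_of_mem_closedBall (by simpa [← dist_eq_norm] using (mem_ball.mp hy).le)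
  · rw [abs_of_nonneg ψ.nonneg]
    exact ψ.le_one
  · rw [fderiv_comp_sub]
    exact hK _

variable [MeasurableSpace E] [BorelSpace E]

lemma lintegral_enorm_fderiv_mul_le {v χ : E → ℝ} {K : ℝ} (hv : ContDiff ℝ 1 v)
    (hχ : Differentiable ℝ χ) (hχ1 : ∀ y, |χ y| ≤ 1) (hχK : ∀ y, ‖fderiv ℝ χ y‖ ≤ K)
    (μ : Measure E) :
    ∫⁻ z, ‖fderiv ℝ (v * χ) z‖ₑ ∂μ ≤
      ENNReal.ofReal K * ∫⁻ z, ‖v z‖ₑ ∂μ + ∫⁻ z, ‖fderiv ℝ v z‖ₑ ∂μ := by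
  have hK : 0 ≤ K := (norm_nonneg _).trans (hχK 0)
  have hv_meas : Measurable fun z => ‖v z‖ₑ := hv.continuous.measurable.enorm
  calc ∫⁻ z, ‖fderiv ℝ (v * χ) z‖ₑ ∂μ
      ≤ ∫⁻ z, ENNReal.ofReal K * ‖v z‖ₑ + ‖fderiv ℝ v z‖ₑ ∂μ := lintegral_mono fun z => by
        rw [← ofReal_norm, ← ofReal_norm, ← ofReal_norm, Real.norm_eq_abs, ← ENNReal.ofReal_mul hK,
          ← ENNReal.ofReal_add (by positivity) (norm_nonneg _)]
        exact ENNReal.ofReal_le_ofReal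
          (norm_fderiv_mul_le (hv.differentiable one_ne_zero z) (hχ z) (hχ1 z) (hχK z))
    _ = _ := by rw [lintegral_add_left (hv_meas.const_mul _), lintegral_const_mul _ hv_meas]

variable [FiniteDimensional ℝ E] (μ : Measure E) [μ.IsAddHaarMeasure]

lemma measure_le_of_one_le_abs {w : E → ℝ} (hw : ContDiff ℝ 1 w) (hwc : HasCompactSupport w)
    {p : ℝ≥0} (hp : NNReal.HolderConjugate (Module.finrank ℝ E) p) {A : Set E}
    (hA : ∀ x ∈ A, 1 ≤ |w x|) :
    μ A ≤ (eLpNormLESNormFDerivOneConst μ p * ∫⁻ x, ‖fderiv ℝ w x‖ₑ ∂μ) ^ (p : ℝ) := by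
  have hp0 : (p : ℝ≥0∞) ≠ 0 := by exact_mod_cast hp.symm.pos.ne'
  calc μ A ≤ μ {x | 1 ≤ ‖w x‖ₑ} := measure_mono fun x hx => by
        show 1 ≤ ‖w x‖ₑ
        rw [← ofReal_norm, Real.norm_eq_abs, ← ENNReal.ofReal_one]
        exact ENNReal.ofReal_le_ofReal (hA x hx)
    _ ≤ eLpNorm w p μ ^ (p : ℝ) := by
        simpa using mul_meas_ge_le_pow_eLpNorm' μ hp0 ENNReal.coe_ne_top
          hw.continuous.aestronglyMeasurable 1
    _ ≤ _ := by
        gcongr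
        rw [← eLpNorm_one_eq_lintegral_enorm]
        exact eLpNorm_le_eLpNorm_fderiv_one μ hw hwc hp

end Sobolev

lemma le_rpow_const_mul_sInf {S : Set ℝ≥0∞} {a C : ℝ≥0∞} {p : ℝ} (hC0 : C ≠ 0) (hC : C ≠ ∞)
    (hp : 0 < p) (h : ∀ c ∈ S, a ≤ (C * c) ^ p) : a ≤ (C * sInf S) ^ p := by
  have hmono : Monotone fun c => (C * c) ^ p := fun c d hcd =>
    ENNReal.rpow_le_rpow (by gcongr) hp.le
  have hcont : Continuous fun c => (C * c) ^ p :=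
    (ENNReal.continuous_rpow_const).comp (ENNReal.continuous_const_mul hC)
  rw [hmono.map_sInf_of_continuousAt hcont.continuousAt
    (by simp [ENNReal.mul_top hC0, ENNReal.top_rpow_of_pos hp])]
  exact le_sInf (forall_mem_image.2 h)

lemma le_mul_of_le_rpow_of_le_pow {a C κ s ω : ℝ≥0∞} {n : ℕ} (hn : 2 ≤ n)
    (hsob : a ≤ (C * κ) ^ ((n : ℝ) / (n - 1))) (hvol : a ≤ ω * s ^ n) :
    a ≤ (ω + C ^ ((n : ℝ) / (n - 1))) * s * κ := by
  have hn1 : (0 : ℝ) < n - 1 := by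
    have : (2 : ℝ) ≤ n := by exact_mod_cast hn
    linarith
  rcases le_or_gt κ (s ^ (n - 1)) with hκ | hκ
  · have hκs : κ ^ (1 / ((n : ℝ) - 1)) ≤ s := calc
      κ ^ (1 / ((n : ℝ) - 1)) ≤ (s ^ (n - 1)) ^ (1 / ((n : ℝ) - 1)) := by gcongr
      _ = s := by
        rw [← ENNReal.rpow_natCast, ← ENNReal.rpow_mul, Nat.cast_sub (by omega), Nat.cast_one,
          mul_one_div_cancel hn1.ne', ENNReal.rpow_one]
    have hsplit : (n : ℝ) / (n - 1) = 1 + 1 / (n - 1) := by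
      field_simp
      ring
    calc a ≤ (C * κ) ^ ((n : ℝ) / (n - 1)) := hsob
      _ = C ^ ((n : ℝ) / (n - 1)) * (κ * κ ^ (1 / ((n : ℝ) - 1))) := by
        rw [ENNReal.mul_rpow_of_nonneg _ _ (by positivity)]
        congr 1
        rw [hsplit, ENNReal.rpow_add_of_nonneg _ _ zero_le_one (by positivity), ENNReal.rpow_one]
      _ ≤ C ^ ((n : ℝ) / (n - 1)) * s * κ := by
        rw [mul_assoc, mul_comm s]
        gcongr
      _ ≤ _ := by gcongr; exact le_add_self
  · calc a ≤ ω * s ^ n := hvol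
      _ = ω * s * s ^ (n - 1) := by rw [mul_assoc, ← pow_succ', Nat.sub_add_cancel (by omega)]
      _ ≤ ω * s * κ := by gcongr
      _ ≤ _ := by gcongr; exact le_self_add

lemma div_le_div_mul_div_of_le_mul {a K κ s ω : ℝ≥0∞} {n : ℕ} (hn : n ≠ 0) (hs0 : s ≠ 0)
    (hs : s ≠ ∞) (hω0 : ω ≠ 0) (hω : ω ≠ ∞) (h : a ≤ K * s * κ) :
    a / (s ^ n * ω) ≤ K / ω * (κ / s ^ (n - 1)) := by
  refine ENNReal.div_le_of_le_mul (h.trans_eq ?_)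
  rw [← pow_sub_one_mul hn]
  have ht0 : s ^ (n - 1) ≠ 0 := pow_ne_zero _ hs0
  have ht : s ^ (n - 1) ≠ ∞ := ENNReal.pow_ne_top hs
  calc K * s * κ = K * s * κ * (ω⁻¹ * ω) * ((s ^ (n - 1))⁻¹ * s ^ (n - 1)) := by
        rw [ENNReal.inv_mul_cancel hω0 hω, ENNReal.inv_mul_cancel ht0 ht, mul_one, mul_one]
    _ = K / ω * (κ / s ^ (n - 1)) * (s ^ (n - 1) * s * ω) := by
        simp only [div_eq_mul_inv]
        ring

section Capacity

variable {u : En n → ℝ} {g : En n → (En n →L[ℝ] ℝ)} {χ : En n → ℝ} {K : ℝ} {A : Set (En n)}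

def gnsConst (n : ℕ) : ℝ≥0∞ :=
  eLpNormLESNormFDerivOneConst (volume : Measure (En n)) (NNReal.conjExponent n)

lemma volume_le_of_one_le_on_thickening (hn : 2 ≤ n) (hu : Integrable u)
    (hg : Integrable fun x => ‖g x‖) (hw : IsWeakGrad u g) (hχ : ContDiff ℝ 1 χ)
    (hχc : HasCompactSupport χ) (hχA : ∀ y ∈ A, χ y = 1) (hχ1 : ∀ y, |χ y| ≤ 1)
    (hχK : ∀ y, ‖fderiv ℝ χ y‖ ≤ K) {ε : ℝ} (hε : 0 < ε)
    (hA : ∀ y ∈ thickening ε A, 1 ≤ u y) :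
    volume A ≤ (gnsConst n * (ENNReal.ofReal K + 1) *
      ENNReal.ofReal ((∫ x, |u x|) + ∫ x, ‖g x‖)) ^ ((n : ℝ) / (n - 1)) := by
  have hp : NNReal.HolderConjugate (Module.finrank ℝ (En n)) (NNReal.conjExponent n) := by
    rw [finrank_euclideanSpace_fin]
    exact .conjExponent (by exact_mod_cast (by omega : 1 < n))
  have hp_eq : (NNReal.conjExponent n : ℝ) = n / (n - 1) := by
    rw [NNReal.conjExponent, NNReal.coe_div, NNReal.coe_sub (by exact_mod_cast (by omega : 1 ≤ n))]
    simp
  let φ : ContDiffBump (0 : En n) := ⟨ε / 2, ε, half_pos hε, half_lt_self hε⟩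
  let v := u ⋆[lsmul ℝ ℝ] φ.normed volume
  have hv : ContDiff ℝ 1 v := φ.hasCompactSupport_normed.contDiff_convolution_right _
    hu.locallyIntegrable φ.contDiff_normed
  have hv_int : ∫⁻ z, ‖v z‖ₑ ≤ ENNReal.ofReal (∫ x, |u x|) :=
    lintegral_enorm_le_of_le_convolution_normed φ hu.abs (fun _ => abs_nonneg _) fun z =>
      abs_convolution_le_of_abs_le φ.nonneg_normed (fun _ => le_rfl)
        (φ.hasCompactSupport_normed.convolutionExists_right _ hu.abs.locallyIntegrable
          φ.continuous_normed z)
  have hDv_int : ∫⁻ z, ‖fderiv ℝ v z‖ₑ ≤ ENNReal.ofReal (∫ x, ‖g x‖) :=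
    lintegral_enorm_le_of_le_convolution_normed φ hg (fun _ => norm_nonneg _)
      (hw.norm_fderiv_convolution_le hu.locallyIntegrable hg.locallyIntegrable φ.contDiff_normed
        φ.hasCompactSupport_normed φ.nonneg_normed)
  have hvA : ∀ y ∈ A, 1 ≤ |(v * χ) y| := fun y hy => by
    rw [Pi.mul_apply, hχA y hy, mul_one]
    refine (one_le_convolution_normed φ (fun t ht => hA t (ball_subset_thickening hy ε ht))
      ?_).trans (le_abs_self _)
    exact φ.hasCompactSupport_normed.convolutionExists_right _ hu.locallyIntegrable
      φ.continuous_normed y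
  calc volume A ≤ (gnsConst n * ∫⁻ z, ‖fderiv ℝ (v * χ) z‖ₑ) ^ (NNReal.conjExponent n : ℝ) :=
        measure_le_of_one_le_abs volume (hv.mul hχ) hχc.mul_left hp hvA
    _ ≤ (gnsConst n * (ENNReal.ofReal K * ENNReal.ofReal (∫ x, |u x|) +
          ENNReal.ofReal (∫ x, ‖g x‖))) ^ (NNReal.conjExponent n : ℝ) := by
        gcongr
        exact (lintegral_enorm_fderiv_mul_le hv (hχ.differentiable one_ne_zero) hχ1 hχK
          volume).trans (by gcongr)
    _ ≤ (gnsConst n * (ENNReal.ofReal K + 1) * ENNReal.ofReal ((∫ x, |u x|) + ∫ x, ‖g x‖)) ^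
          (NNReal.conjExponent n : ℝ) := by
        rw [mul_assoc, ENNReal.ofReal_add (integral_nonneg fun _ => abs_nonneg _)
          (integral_nonneg fun _ => norm_nonneg _), add_mul, one_mul]
        gcongr
        exacts [le_self_add, le_add_self]
    _ = _ := by rw [hp_eq]

lemma volume_le_of_one_le_on_open (hn : 2 ≤ n) (hu : Integrable u)
    (hg : Integrable fun x => ‖g x‖) (hw : IsWeakGrad u g) (hχ : ContDiff ℝ 1 χ)
    (hχc : HasCompactSupport χ) (hχA : ∀ y ∈ A, χ y = 1) (hχ1 : ∀ y, |χ y| ≤ 1)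
    (hχK : ∀ y, ‖fderiv ℝ χ y‖ ≤ K) {V : Set (En n)} (hVo : IsOpen V) (hAV : A ⊆ V)
    (hV : ∀ y ∈ V, 1 ≤ u y) :
    volume A ≤ (gnsConst n * (ENNReal.ofReal K + 1) *
      ENNReal.ofReal ((∫ x, |u x|) + ∫ x, ‖g x‖)) ^ ((n : ℝ) / (n - 1)) := by
  let Aₖ : ℕ → Set (En n) := fun k => {y ∈ A | ball y (1 / (k + 1)) ⊆ V}
  have hmono : Monotone Aₖ := fun k l hkl y hy =>
    ⟨hy.1, (ball_subset_ball (Nat.one_div_le_one_div hkl)).trans hy.2⟩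
  have hunion : ⋃ k, Aₖ k = A := by
    refine (iUnion_subset fun k => sep_subset _ _).antisymm fun y hy => ?_
    obtain ⟨ε, hε, hball⟩ := Metric.isOpen_iff.mp hVo y (hAV hy)
    obtain ⟨k, hk⟩ := exists_nat_one_div_lt hε
    exact mem_iUnion.mpr ⟨k, hy, (ball_subset_ball hk.le).trans hball⟩
  rw [← hunion, hmono.measure_iUnion]
  refine iSup_le fun k => volume_le_of_one_le_on_thickening hn hu hg hw hχ hχc
    (fun y hy => hχA y hy.1) hχ1 hχK (ε := 1 / (k + 1)) Nat.one_div_pos_of_nat fun y hy => hV y ?_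
  rw [thickening_eq_biUnion_ball] at hy
  obtain ⟨z, hz, hyz⟩ := mem_iUnion₂.mp hy
  exact hz.2 hyz

lemma volume_le_cap1_rpow (hn : 2 ≤ n) (hχ : ContDiff ℝ 1 χ) (hχc : HasCompactSupport χ)
    (hχA : ∀ y ∈ A, χ y = 1) (hχ1 : ∀ y, |χ y| ≤ 1) (hχK : ∀ y, ‖fderiv ℝ χ y‖ ≤ K) :
    volume A ≤ ((gnsConst n + 1) * (ENNReal.ofReal K + 1) * cap1 A) ^ ((n : ℝ) / (n - 1)) := by
  have hn1 : (0 : ℝ) < n - 1 := by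
    have : (2 : ℝ) ≤ n := by exact_mod_cast hn
    linarith
  -- `+ 1` keeps the constant nonzero: with no test function at all, `cap1 A = ∞`.
  refine le_rpow_const_mul_sInf (by simp) (ENNReal.mul_ne_top (by simp [gnsConst]) (by simp))
    (div_pos (by linarith) hn1) ?_
  rintro _ ⟨u, g, hu, hg, hw, ⟨V, hVo, hAV, hV⟩, rfl⟩
  refine (volume_le_of_one_le_on_open hn hu hg hw hχ hχc hχA hχ1 hχK hVo hAV hV).trans ?_
  gcongr
  exact le_self_add

end Capacity

lemma exists_volume_le_mul_cap1 (hn : 2 ≤ n) : ∃ C : ℝ≥0∞, C ≠ ∞ ∧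
    ∀ (x : En n) (r : ℝ) (A : Set (En n)), 0 < r → r < 1 → A ⊆ ball x r →
      volume A ≤ C * ENNReal.ofReal r * cap1 A := by
  obtain ⟨K, hK⟩ := exists_cutoff_ball_one (E := En n)
  set p : ℝ := (n : ℝ) / (n - 1)
  have hp : 0 ≤ p := div_nonneg (Nat.cast_nonneg _) (sub_nonneg.2 (mod_cast (by omega : 1 ≤ n)))
  refine ⟨volume (ball (0 : En n) 1) + ((gnsConst n + 1) * (ENNReal.ofReal K + 1)) ^ p,
    ENNReal.add_ne_top.2 ⟨measure_ball_lt_top.ne, ENNReal.rpow_ne_top_of_nonneg hp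
      (ENNReal.mul_ne_top (by simp [gnsConst]) (by simp))⟩, fun x r A hr hr1 hA => ?_⟩
  obtain ⟨χ, hχ, hχc, hχA, hχ1, hχK⟩ := hK x
  refine le_mul_of_le_rpow_of_le_pow hn ?_ ((measure_mono hA).trans_eq ?_)
  · exact volume_le_cap1_rpow hn hχ hχc (fun y hy => hχA y (ball_subset_ball hr1.le (hA hy)))
      hχ1 hχK
  · rw [Measure.addHaar_ball_of_pos _ _ hr, finrank_euclideanSpace_fin, ENNReal.ofReal_pow hr.le,
      mul_comm]

/-- Capacity controls relative measure in small balls: there is a constant `C_I ≥ 1`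
(the relative isoperimetric constant, depending only on `n`) such that for `0 < r < 1`
and `A ⊆ B(x,r)`, `|A|/|B(x,r)| ≤ (2 C_I / ω_n) cap₁(A)/r^{n-1}`. -/
theorem cap1_lower_bound_in_small_ball (hn : 2 ≤ n) :
    ∃ C_I : ℝ≥0∞, 1 ≤ C_I ∧ C_I ≠ ∞ ∧
      ∀ (x : En n) (r : ℝ) (A : Set (En n)), 0 < r → r < 1 → A ⊆ ball x r →
        volume A / volume (ball x r) ≤
          2 * C_I / volume (ball (0 : En n) 1) * (cap1 A / ENNReal.ofReal (r ^ (n - 1))) := by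
  obtain ⟨C, hC, hvol⟩ := exists_volume_le_mul_cap1 hn
  refine ⟨1 + C, le_self_add, by simp [hC], fun x r A hr hr1 hA => ?_⟩
  have hω0 : volume (ball (0 : En n) 1) ≠ 0 := (measure_ball_pos volume _ one_pos).ne'
  calc volume A / volume (ball x r)
      = volume A / (ENNReal.ofReal r ^ n * volume (ball (0 : En n) 1)) := by
        rw [Measure.addHaar_ball_of_pos _ _ hr, finrank_euclideanSpace_fin,
          ENNReal.ofReal_pow hr.le]
    _ ≤ C / volume (ball (0 : En n) 1) * (cap1 A / ENNReal.ofReal r ^ (n - 1)) :=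
        div_le_div_mul_div_of_le_mul (by omega) (by simpa using hr) ENNReal.ofReal_ne_top hω0
          measure_ball_lt_top.ne (hvol x r A hr hr1 hA)
    _ ≤ 2 * (1 + C) / volume (ball (0 : En n) 1) * (cap1 A / ENNReal.ofReal (r ^ (n - 1))) := by
        rw [ENNReal.ofReal_pow hr.le]
        gcongr
        exact le_add_self.trans (le_mul_of_one_le_left' one_le_two)

end
end

section
/- Let f: Ω → Ω' be a homeomorphism between open subsets of ℝ^n, and define J_f(x) := limsup_{r→0} |f(B(x,r))|/|B(x,r)|. Then ∫_Ω J_f dℒ^n ≤ |f(Ω)|. -/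
/-!
By the Lusin–Souslin theorem `f` maps Borel subsets of `Ω` to Borel sets, and by injectivity
`A ↦ |f(Ω ∩ A)|` is then a Borel measure `ρ`, finite once `|f(Ω)| < ∞`. On the open set `Ω`,
`J_f` is the upper density of `ρ` along balls, which by Besicovitch's differentiation theorem is
a.e. at most the Radon–Nikodym derivative `dρ/dℒⁿ`; the integral of the latter over `Ω` is at
most `ρ(Ω) = |f(Ω)|`.
-/

open MeasureTheory Metric Set Filter ENNReal Topology

noncomputable section

variable {n : ℕ}

section BallDensity

variable {E : Type*} [NormedAddCommGroup E] [NormedSpace ℝ E] [FiniteDimensional ℝ E]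
  [MeasurableSpace E] [BorelSpace E] (μ : Measure E) [μ.IsAddHaarMeasure]

/-- Besicovitch differentiation is along closed balls; passing to open balls can only lower
the numerator, and does not change the denominator since spheres of positive radius are
`μ`-null. -/
theorem ae_limsup_measure_ball_div_le_rnDeriv (ρ : Measure E) [IsLocallyFiniteMeasure ρ] :
    ∀ᵐ x ∂μ, limsup (fun r => ρ (ball x r) / μ (ball x r)) (𝓝[>] 0) ≤ ρ.rnDeriv μ x := by
  filter_upwards [Besicovitch.ae_tendsto_rnDeriv ρ μ] with x hx
  rw [← hx.limsup_eq]
  refine limsup_le_limsup ?_ isCobounded_le_of_bot isBounded_le_of_top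
  filter_upwards [self_mem_nhdsWithin] with r (hr : 0 < r)
  have hμ : μ (closedBall x r) ≤ μ (ball x r) := calc
    μ (closedBall x r) = μ (ball x r ∪ sphere x r) := by rw [ball_union_sphere]
    _ ≤ μ (ball x r) + μ (sphere x r) := measure_union_le _ _
    _ = μ (ball x r) := by rw [Measure.addHaar_sphere_of_ne_zero μ x hr.ne', add_zero]
  exact ENNReal.div_le_div (measure_mono ball_subset_closedBall) hμ

theorem setLIntegral_limsup_measure_ball_div_le (ρ : Measure E) [IsLocallyFiniteMeasure ρ]
    (s : Set E) :
    ∫⁻ x in s, limsup (fun r => ρ (ball x r) / μ (ball x r)) (𝓝[>] 0) ∂μ ≤ ρ s :=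
  (lintegral_mono_ae (ae_restrict_of_ae (ae_limsup_measure_ball_div_le_rnDeriv μ ρ))).trans
    (Measure.setLIntegral_rnDeriv_le s)

end BallDensity

section PullbackOn

variable {α β : Type*} [MeasurableSpace α] [MeasurableSpace β]

/-- The measure `A ↦ ν (f '' (s ∩ A))`, well defined when `f` is injective on `s`. -/
def Measure.pullbackOn (f : α → β) (s : Set α) (ν : Measure β) : Measure α :=
  (ν.comap (s.domRestrict f)).map Subtype.val

theorem Measure.pullbackOn_apply {f : α → β} {s : Set α} (ν : Measure β) (hs : MeasurableSet s)
    (hinj : InjOn f s) (himg : ∀ t ⊆ s, MeasurableSet t → MeasurableSet (f '' t))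
    {A : Set α} (hA : MeasurableSet A) :
    Measure.pullbackOn f s ν A = ν (f '' (s ∩ A)) := by
  have himg' : ∀ t : Set s, MeasurableSet t → MeasurableSet (s.domRestrict f '' t) := by
    intro t ht
    rw [domRestrict_eq, image_comp]
    exact himg _ (Subtype.coe_image_subset s t) (hs.subtype_image ht)
  rw [Measure.pullbackOn, Measure.map_apply measurable_subtype_coe hA,
    Measure.comap_apply _ hinj.injective himg' ν (measurable_subtype_coe hA), domRestrict_eq,
    image_comp, Subtype.image_preimage_coe]

end PullbackOn

theorem Jvol_eq_limsup_pullbackOn {Ω : Set (En n)} (hΩ : IsOpen Ω) {f : En n → En n}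
    (hinj : InjOn f Ω) (himg : ∀ t ⊆ Ω, MeasurableSet t → MeasurableSet (f '' t)) {x : En n}
    (hx : x ∈ Ω) :
    Jvol f x = limsup (fun r => Measure.pullbackOn f Ω volume (ball x r) / volume (ball x r))
      (𝓝[>] 0) := by
  obtain ⟨ε, hε, hball⟩ := Metric.isOpen_iff.1 hΩ x hx
  refine limsup_congr ?_
  filter_upwards [Ioo_mem_nhdsGT hε] with r hr
  rw [Measure.pullbackOn_apply volume hΩ.measurableSet hinj himg measurableSet_ball,
    inter_eq_right.2 ((ball_subset_ball hr.2.le).trans hball)]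

theorem lintegral_Jvol_le_general (Ω : Set (En n)) (hΩ : IsOpen Ω)
    (f : En n → En n) (hcont : ContinuousOn f Ω) (hinj : InjOn f Ω) :
    ∫⁻ x in Ω, Jvol f x ≤ volume (f '' Ω) := by
  rcases eq_or_ne (volume (f '' Ω)) ∞ with htop | htop
  · simp [htop]
  have himg : ∀ t ⊆ Ω, MeasurableSet t → MeasurableSet (f '' t) := fun t ht htm =>
    htm.image_of_continuousOn_injOn (hcont.mono ht) (hinj.mono ht)
  set ρ := Measure.pullbackOn f Ω volume
  have hρ : ∀ A, MeasurableSet A → ρ A = volume (f '' (Ω ∩ A)) := fun A hA =>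
    Measure.pullbackOn_apply volume hΩ.measurableSet hinj himg hA
  have : IsFiniteMeasure ρ := ⟨by simpa [hρ] using htop.lt_top⟩
  calc ∫⁻ x in Ω, Jvol f x
      = ∫⁻ x in Ω, limsup (fun r => ρ (ball x r) / volume (ball x r)) (𝓝[>] 0) :=
        setLIntegral_congr_fun hΩ.measurableSet fun x hx =>
          Jvol_eq_limsup_pullbackOn hΩ hinj himg hx
    _ ≤ ρ Ω := setLIntegral_limsup_measure_ball_div_le volume ρ Ω
    _ = volume (f '' Ω) := by rw [hρ _ hΩ.measurableSet, inter_self]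

/-- For a homeomorphism `f : Ω → Ω'`, the volume derivative `J_f` satisfies
`∫_Ω J_f dℒⁿ ≤ |f(Ω)|`. -/
theorem lintegral_Jvol_le (hn : 2 ≤ n) (Ω Ω' : Set (En n)) (hΩ : IsOpen Ω) (hΩ' : IsOpen Ω')
    (f : En n → En n) (hcont : ContinuousOn f Ω) (hinj : InjOn f Ω) (himg : f '' Ω = Ω')
    (hopen : ∀ V ⊆ Ω, IsOpen V → IsOpen (f '' V)) :
    ∫⁻ x in Ω, Jvol f x ≤ volume (f '' Ω) :=
  lintegral_Jvol_le_general Ω hΩ f hcont hinj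

end
end

section
/- Let n ≥ 2 and let L: ℝ^n → ℝ^n be a linear map. Let x ∈ ℝ^n, and let U ⊂ ℝ^n be a set such that lim_{r→0} |B(x,r) \ U|/|B(x,r)| = 0. Then lim_{r→0} diam(L(B(x,r) ∩ U))/r = 2‖L‖, where ‖L‖ = max_{|v|=1} |Lv| is the operator norm. -/
/-! The bound `diam (L '' (B(x,r) ∩ U)) ≤ 2‖L‖r` holds for every `r`. Conversely, take `v` with
`‖v‖ < 1` and `‖L v‖` close to `‖L‖`. Once `|B(x,r) \ U| < ηⁿ |B(x,r)|`, no ball of radius `ηr`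
inside `B(x,r)` misses `U`; so the two balls of radius `ηr` centred at `x ± (1-η)r v` each contain
a point of `U`, and `L` maps these points at distance at least `2(1-η)r‖L v‖ - 2ηr‖L‖`. -/

open MeasureTheory Metric Set Filter ENNReal Topology

noncomputable section

variable {n : ℕ}

open Module

section

variable {E F : Type*} [NormedAddCommGroup E] [NormedSpace ℝ E]
  [SeminormedAddCommGroup F] [NormedSpace ℝ F]

namespace ContinuousLinearMap

theorem diam_image_ball_inter_le (L : E →L[ℝ] F) (x : E) (U : Set E) {r : ℝ} (hr : 0 ≤ r) :
    diam (L '' (ball x r ∩ U)) ≤ 2 * ‖L‖ * r :=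
  calc diam (L '' (ball x r ∩ U))
      ≤ ‖L‖ * diam (ball x r ∩ U) :=
        L.lipschitz.diam_image_le _ (isBounded_ball.subset inter_subset_left)
    _ ≤ ‖L‖ * (2 * r) := by
        gcongr
        exact (diam_mono inter_subset_left isBounded_ball).trans (diam_ball hr)
    _ = 2 * ‖L‖ * r := by ring

theorem norm_map_sub_le_dist_add (L : E →L[ℝ] F) {a b p q : E} {δ : ℝ}
    (ha : dist a p ≤ δ) (hb : dist b q ≤ δ) :
    ‖L (p - q)‖ ≤ dist (L a) (L b) + 2 * ‖L‖ * δ := by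
  have hap : dist (L p) (L a) ≤ ‖L‖ * δ := by
    rw [dist_comm]
    exact (L.dist_le_opNorm a p).trans (mul_le_mul_of_nonneg_left ha (norm_nonneg L))
  have hbq : dist (L b) (L q) ≤ ‖L‖ * δ :=
    (L.dist_le_opNorm b q).trans (mul_le_mul_of_nonneg_left hb (norm_nonneg L))
  calc ‖L (p - q)‖ = dist (L p) (L q) := by rw [map_sub, dist_eq_norm]
    _ ≤ dist (L p) (L a) + dist (L a) (L b) + dist (L b) (L q) := dist_triangle4 _ _ _ _
    _ ≤ dist (L a) (L b) + 2 * ‖L‖ * δ := by linarith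

end ContinuousLinearMap

variable [FiniteDimensional ℝ E] [MeasurableSpace E] [BorelSpace E]
  (μ : Measure E) [μ.IsAddHaarMeasure]

theorem inter_nonempty_of_measure_ball_diff_div_lt {x y : E} {U : Set E} {r η : ℝ}
    (hr : 0 < r) (hη : 0 < η)
    (hU : μ (ball x r \ U) / μ (ball x r) < ENNReal.ofReal (η ^ finrank ℝ E))
    (hy : ball y (η * r) ⊆ ball x r) : (ball y (η * r) ∩ U).Nonempty := by
  by_contra hempty
  have hsub : ball y (η * r) ⊆ ball x r \ U := fun z hz =>
    ⟨hy hz, fun hzU => hempty ⟨z, hz, hzU⟩⟩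
  have hscale : μ (ball y (η * r)) = ENNReal.ofReal (η ^ finrank ℝ E) * μ (ball x r) := by
    rw [Measure.addHaar_ball_mul_of_pos μ y hη, Measure.addHaar_ball_center μ x]
  refine hU.not_ge ((ENNReal.le_div_iff_mul_le (Or.inl (measure_ball_pos μ x hr).ne')
    (Or.inl measure_ball_lt_top.ne)).2 ?_)
  exact hscale ▸ measure_mono hsub

theorem ContinuousLinearMap.le_diam_image_ball_inter (L : E →L[ℝ] F) {x v : E} {U : Set E}
    {r η : ℝ} (hr : 0 < r) (hη₀ : 0 < η) (hη₁ : η ≤ 1) (hv : ‖v‖ ≤ 1)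
    (hU : μ (ball x r \ U) / μ (ball x r) < ENNReal.ofReal (η ^ finrank ℝ E)) :
    (2 * (1 - η) * ‖L v‖ - 2 * η * ‖L‖) * r ≤ diam (L '' (ball x r ∩ U)) := by
  have hc : 0 ≤ (1 - η) * r := mul_nonneg (sub_nonneg.2 hη₁) hr.le
  set w := ((1 - η) * r) • v
  have hw : ‖w‖ ≤ (1 - η) * r := by
    rw [norm_smul, Real.norm_of_nonneg hc]
    exact mul_le_of_le_one_right hc hv
  have hsub : ∀ y, dist y x ≤ (1 - η) * r → ball y (η * r) ⊆ ball x r := fun y hy =>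
    ball_subset_ball' (by linarith)
  have hball_add := hsub (x + w) (by simpa using hw)
  have hball_sub := hsub (x - w) (by simpa using hw)
  obtain ⟨a, ha, haU⟩ := inter_nonempty_of_measure_ball_diff_div_lt μ hr hη₀ hU hball_add
  obtain ⟨b, hb, hbU⟩ := inter_nonempty_of_measure_ball_diff_div_lt μ hr hη₀ hU hball_sub
  have hbdd : Bornology.IsBounded (L '' (ball x r ∩ U)) :=
    L.lipschitz.isBounded_image (isBounded_ball.subset inter_subset_left)
  calc (2 * (1 - η) * ‖L v‖ - 2 * η * ‖L‖) * r
      = ‖L (x + w - (x - w))‖ - 2 * ‖L‖ * (η * r) := by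
        rw [add_sub_sub_cancel, ← two_smul ℝ w, map_smul, map_smul, norm_smul, norm_smul,
          Real.norm_of_nonneg hc, Real.norm_two]
        ring
    _ ≤ dist (L a) (L b) := by
        linarith [L.norm_map_sub_le_dist_add (mem_ball.1 ha).le (mem_ball.1 hb).le]
    _ ≤ diam (L '' (ball x r ∩ U)) :=
        dist_le_diam_of_mem hbdd (mem_image_of_mem L ⟨hball_add ha, haU⟩)
          (mem_image_of_mem L ⟨hball_sub hb, hbU⟩)

end

theorem diam_linear_image_density_one_general (L : En n →L[ℝ] En n) (x : En n)
    (U : Set (En n))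
    (hU : Tendsto (fun r : ℝ => volume (ball x r \ U) / volume (ball x r)) (𝓝[>] 0) (𝓝 0)) :
    Tendsto (fun r : ℝ => Metric.diam (L '' (ball x r ∩ U)) / r) (𝓝[>] 0) (𝓝 (2 * ‖L‖)) := by
  refine tendsto_order.2 ⟨fun a ha => ?_, fun a ha => ?_⟩
  · obtain ⟨v, hv, hav⟩ := L.exists_lt_apply_of_lt_opNorm (show a / 2 < ‖L‖ by linarith)
    have hlim : Tendsto (fun η : ℝ => 2 * (1 - η) * ‖L v‖ - 2 * η * ‖L‖) (𝓝 0)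
        (𝓝 (2 * ‖L v‖)) := by
      simpa using ((show Continuous fun η : ℝ => 2 * (1 - η) * ‖L v‖ - 2 * η * ‖L‖ by
        fun_prop).tendsto 0)
    have hη : ∀ᶠ η in 𝓝[>] (0 : ℝ), η < 1 ∧ a < 2 * (1 - η) * ‖L v‖ - 2 * η * ‖L‖ :=
      ((eventually_lt_nhds one_pos).and
        (hlim.eventually_const_lt (show a < 2 * ‖L v‖ by linarith))).filter_mono nhdsWithin_le_nhds
    obtain ⟨η, ⟨hη₁, hηa⟩, hη₀ : 0 < η⟩ := (hη.and self_mem_nhdsWithin).exists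
    filter_upwards [hU.eventually (gt_mem_nhds (ofReal_pos.2 (pow_pos hη₀ n))),
      self_mem_nhdsWithin] with r hrU (hr : 0 < r)
    rw [lt_div_iff₀ hr]
    exact (mul_lt_mul_of_pos_right hηa hr).trans_le <| L.le_diam_image_ball_inter volume hr hη₀
      hη₁.le hv.le (by rwa [finrank_euclideanSpace_fin])
  · filter_upwards [self_mem_nhdsWithin] with r (hr : 0 < r)
    rw [div_lt_iff₀ hr]
    exact (L.diam_image_ball_inter_le x U hr.le).trans_lt (mul_lt_mul_of_pos_right ha hr)

/-- If `U` has Lebesgue density 1 at `x`, then for a linear map `L`,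
`diam(L(B(x,r) ∩ U))/r → 2‖L‖` as `r → 0`. -/
theorem diam_linear_image_density_one (hn : 2 ≤ n) (L : En n →L[ℝ] En n) (x : En n)
    (U : Set (En n))
    (hU : Tendsto (fun r : ℝ => volume (ball x r \ U) / volume (ball x r)) (𝓝[>] 0) (𝓝 0)) :
    Tendsto (fun r : ℝ => Metric.diam (L '' (ball x r ∩ U)) / r) (𝓝[>] 0) (𝓝 (2 * ‖L‖)) :=
  diam_linear_image_density_one_general L x U hU

end
end

section
/- Let Ω ⊂ ℝ^n be open, f: Ω → ℝ^n continuous, and x ∈ Ω. Suppose U ∋ x is a set with lim_{r→0} |B(x,r)\U|/|B(x,r)| = 0 such that lim_{U∋y→x, y≠x} |f(y) - f(x) - A(y-x)|/|y-x| = 0 for some linear map A: ℝ^n → ℝ^n. Then limsup_{r→0} diam(f(B(x,r) ∩ U))^n / |B(x,r)| = (2^n/ω_n)·‖A‖^n, where ‖A‖ is the operator (maximum) norm and ω_n = |B(0,1)|. -/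
open MeasureTheory Metric Set Filter ENNReal Topology

noncomputable section

variable {n : ℕ}

/-! `f` is within `o(r)` of its linearisation on `B(x,r) ∩ U`, so `f(B(x,r) ∩ U)` lies in a ball of
radius `(‖A‖ + o(1)) r` around `f x`. Conversely, since `U` has density one at `x`, it meets the
two small balls `B(x ± (1 - ε) r v, ε r)`, where `‖v‖ < 1` and `‖A v‖` is close to `‖A‖`; points
of `U` in them have images about `2 r ‖A‖` apart. Hence `diam f(B(x,r) ∩ U) / r → 2‖A‖`, and
dividing the `n`-th power by `|B(x,r)| = rⁿ ω_n` gives the limit. -/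

open Module MeasureTheory.Measure

section Linearization

variable {E F : Type*} [NormedAddCommGroup E] [NormedSpace ℝ E] [NormedAddCommGroup F]
  [NormedSpace ℝ F] {f : E → F} {A : E →L[ℝ] F} {x : E} {s U : Set E}

theorem ediam_image_le_of_norm_sub_le {r κ : ℝ} (hs : s ⊆ closedBall x r)
    (hf : ∀ y ∈ s, ‖f y - f x - A (y - x)‖ ≤ κ) :
    ediam (f '' s) ≤ ENNReal.ofReal (2 * (‖A‖ * r + κ)) := by
  have hbound : ∀ y ∈ s, dist (f y) (f x) ≤ ‖A‖ * r + κ := fun y hy => calc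
    dist (f y) (f x) ≤ ‖A (y - x)‖ + ‖f y - f x - A (y - x)‖ := by
      rw [dist_eq_norm]; exact norm_le_insert' _ _
    _ ≤ ‖A‖ * r + κ := by
      gcongr
      · exact A.le_opNorm_of_le (mem_closedBall_iff_norm.1 (hs hy))
      · exact hf y hy
  refine ediam_image_le_iff.2 fun y hy z hz => ?_
  rw [edist_dist]
  gcongr
  linarith [dist_triangle_right (f y) (f z) (f x), hbound y hy, hbound z hz]

theorem ofReal_le_ediam_image_of_norm_sub_le {w : E} {ρ κ : ℝ}
    (hf : ∀ y ∈ s, ‖f y - f x - A (y - x)‖ ≤ κ)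
    (hp : (s ∩ ball (x + w) ρ).Nonempty) (hm : (s ∩ ball (x - w) ρ).Nonempty) :
    ENNReal.ofReal (2 * ‖A w‖ - 2 * (‖A‖ * ρ + κ)) ≤ ediam (f '' s) := by
  obtain ⟨yp, hyp, hpρ⟩ := hp
  obtain ⟨ym, hym, hmρ⟩ := hm
  have hsplit : (2 : ℝ) • A w = (f yp - f ym) - (f yp - f x - A (yp - x))
      + (f ym - f x - A (ym - x)) - A (yp - (x + w)) + A (ym - (x - w)) := by
    simp only [map_sub, map_add]
    module
  have hnear : ∀ {y c}, y ∈ ball c ρ → ‖A (y - c)‖ ≤ ‖A‖ * ρ := fun hy =>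
    A.le_opNorm_of_le (mem_ball_iff_norm.1 hy).le
  have hfar : 2 * ‖A w‖ ≤ dist (f yp) (f ym) + 2 * (‖A‖ * ρ + κ) := calc
    2 * ‖A w‖ = ‖(2 : ℝ) • A w‖ := by rw [norm_smul, Real.norm_two]
    _ ≤ ‖f yp - f ym‖ + ‖f yp - f x - A (yp - x)‖ + ‖f ym - f x - A (ym - x)‖
        + ‖A (yp - (x + w))‖ + ‖A (ym - (x - w))‖ := by
      rw [hsplit]
      exact norm_add_le_of_le (norm_sub_le_of_le (norm_add_le_of_le (norm_sub_le _ _) le_rfl)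
        le_rfl) le_rfl
    _ ≤ dist (f yp) (f ym) + κ + κ + ‖A‖ * ρ + ‖A‖ * ρ := by
      rw [dist_eq_norm]
      gcongr
      exacts [hf yp hyp, hf ym hym, hnear hpρ, hnear hmρ]
    _ = dist (f yp) (f ym) + 2 * (‖A‖ * ρ + κ) := by ring
  calc ENNReal.ofReal (2 * ‖A w‖ - 2 * (‖A‖ * ρ + κ)) ≤ ENNReal.ofReal (dist (f yp) (f ym)) := by
        gcongr; linarith
    _ ≤ ediam (f '' s) := by
        rw [← edist_dist]
        exact edist_le_ediam_of_mem (mem_image_of_mem f hyp) (mem_image_of_mem f hym)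

theorem eventually_norm_sub_le_on_ball_inter
    (hdiff : Tendsto (fun y => ‖f y - f x - A (y - x)‖ / ‖y - x‖) (𝓝[U \ {x}] x) (𝓝 0))
    {δ : ℝ} (hδ : 0 < δ) :
    ∀ᶠ r in 𝓝[>] (0 : ℝ), ∀ y ∈ ball x r ∩ U, ‖f y - f x - A (y - x)‖ ≤ δ * r := by
  obtain ⟨ρ, hρ, hsmall⟩ := Metric.mem_nhdsWithin_iff.1 (hdiff (Iio_mem_nhds hδ))
  filter_upwards [Ioo_mem_nhdsGT hρ] with r ⟨hr, hrρ⟩ y ⟨hyr, hyU⟩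
  rcases eq_or_ne y x with rfl | hyx
  · simp only [sub_self, map_zero, norm_zero]
    positivity
  have hratio : ‖f y - f x - A (y - x)‖ / ‖y - x‖ < δ :=
    hsmall ⟨ball_subset_ball hrρ.le hyr, hyU, hyx⟩
  calc ‖f y - f x - A (y - x)‖ ≤ δ * ‖y - x‖ :=
        ((div_lt_iff₀ (norm_sub_pos_iff.2 hyx)).1 hratio).le
    _ ≤ δ * r := by gcongr; exact (mem_ball_iff_norm.1 hyr).le

end Linearization

theorem ENNReal.tendsto_div_ofReal_nhdsGT_zero {g : ℝ → ℝ≥0∞} {a : ℝ}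
    (hlower : ∀ δ > 0, ∀ᶠ r in 𝓝[>] 0, ENNReal.ofReal ((a - δ) * r) ≤ g r)
    (hupper : ∀ δ > 0, ∀ᶠ r in 𝓝[>] 0, g r ≤ ENNReal.ofReal ((a + δ) * r)) :
    Tendsto (fun r => g r / ENNReal.ofReal r) (𝓝[>] 0) (𝓝 (ENNReal.ofReal a)) := by
  have hscale : ∀ c r : ℝ, 0 < r → ENNReal.ofReal (c * r) / ENNReal.ofReal r = ENNReal.ofReal c :=
    fun c r hr => by
      rw [ENNReal.ofReal_mul' hr.le, ENNReal.mul_div_cancel_right (by simpa using hr)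
        ENNReal.ofReal_ne_top]
  refine tendsto_order.2 ⟨fun b hb => ?_, fun b hb => ?_⟩
  · obtain ⟨c, -, hbc, hca⟩ := ENNReal.lt_iff_exists_real_btwn.1 hb
    have hca : c < a := (ENNReal.ofReal_lt_ofReal_iff'.1 hca).1
    filter_upwards [hlower (a - c) (by linarith), self_mem_nhdsWithin] with r hr (hr0 : 0 < r)
    calc b < ENNReal.ofReal c := hbc
      _ = ENNReal.ofReal ((a - (a - c)) * r) / ENNReal.ofReal r := by rw [hscale _ _ hr0]; ring_nf
      _ ≤ g r / ENNReal.ofReal r := by gcongr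
  · obtain ⟨c, -, hac, hcb⟩ := ENNReal.lt_iff_exists_real_btwn.1 hb
    have hac : a < c := (ENNReal.ofReal_lt_ofReal_iff'.1 hac).1
    filter_upwards [hupper (c - a) (by linarith), self_mem_nhdsWithin] with r hr (hr0 : 0 < r)
    calc g r / ENNReal.ofReal r ≤ ENNReal.ofReal ((a + (c - a)) * r) / ENNReal.ofReal r := by
          gcongr
      _ = ENNReal.ofReal c := by rw [hscale _ _ hr0]; ring_nf
      _ < b := hcb

section Haar

variable {E F : Type*} [NormedAddCommGroup E] [NormedSpace ℝ E] [FiniteDimensional ℝ E]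
  [MeasurableSpace E] [BorelSpace E] (μ : Measure E) [μ.IsAddHaarMeasure]
  [NormedAddCommGroup F] [NormedSpace ℝ F] {f : E → F} {A : E →L[ℝ] F} {x : E} {U : Set E}

theorem ball_inter_nonempty_of_measure_ball_diff_lt {y : E} {r ε : ℝ} (hε : 0 < ε)
    (hy : ball y (ε * r) ⊆ ball x r)
    (hU : μ (ball x r \ U) < ENNReal.ofReal (ε ^ finrank ℝ E) * μ (ball x r)) :
    (ball y (ε * r) ∩ U).Nonempty := by
  by_contra hempty
  have hsub : ball y (ε * r) ⊆ ball x r \ U := fun z hz =>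
    ⟨hy hz, fun hzU => hempty ⟨z, hz, hzU⟩⟩
  refine (measure_mono (μ := μ) hsub).not_gt ?_
  rw [addHaar_ball_mul_of_pos μ y hε]
  rwa [addHaar_ball_center μ x] at hU

theorem eventually_ofReal_le_ediam_image_ball_inter
    (hdens : Tendsto (fun r => μ (ball x r \ U) / μ (ball x r)) (𝓝[>] 0) (𝓝 0))
    (hdiff : Tendsto (fun y => ‖f y - f x - A (y - x)‖ / ‖y - x‖) (𝓝[U \ {x}] x) (𝓝 0))
    {δ : ℝ} (hδ : 0 < δ) :
    ∀ᶠ r in 𝓝[>] 0, ENNReal.ofReal ((2 * ‖A‖ - δ) * r) ≤ ediam (f '' (ball x r ∩ U)) := by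
  -- Four losses of at most `2 η r` each: `‖A v‖` against `‖A‖`, the factor `1 - ε`, the radius
  -- `ε r` of the small balls, and the linearisation error.
  obtain ⟨η, hη, rfl⟩ : ∃ η, 0 < η ∧ δ = 8 * η := ⟨δ / 8, by positivity, by ring⟩
  obtain ⟨v, hv, hAv⟩ := A.exists_lt_apply_of_lt_opNorm (sub_lt_self ‖A‖ hη)
  set ε := min 2⁻¹ (η / (‖A‖ + 1))
  have hε : 0 < ε := by positivity
  have hε1 : ε ≤ 2⁻¹ := min_le_left _ _
  have hεA : ε * ‖A‖ ≤ η := calc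
    ε * ‖A‖ ≤ η / (‖A‖ + 1) * (‖A‖ + 1) := by gcongr; exacts [min_le_right _ _, by linarith]
    _ = η := div_mul_cancel₀ _ (by positivity)
  have hsparse : ∀ᶠ r in 𝓝[>] 0,
      μ (ball x r \ U) < ENNReal.ofReal (ε ^ finrank ℝ E) * μ (ball x r) := by
    filter_upwards [hdens (Iio_mem_nhds (ENNReal.ofReal_pos.2 (pow_pos hε (finrank ℝ E)))),
      self_mem_nhdsWithin] with r hr (hr0 : 0 < r)
    exact (ENNReal.div_lt_iff (Or.inl (measure_ball_pos μ x hr0).ne')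
      (Or.inl measure_ball_lt_top.ne)).1 hr
  filter_upwards [hsparse, eventually_norm_sub_le_on_ball_inter hdiff hη, self_mem_nhdsWithin]
    with r hr happrox (hr0 : 0 < r)
  set t := (1 - ε) * r with ht_def
  have ht : 0 ≤ t := mul_nonneg (by linarith) hr0.le
  have htv : ‖t • v‖ ≤ t := by
    rw [norm_smul, Real.norm_of_nonneg ht]; exact mul_le_of_le_one_right ht hv.le
  have hnonempty : ∀ c, dist c x ≤ t → (ball x r ∩ U ∩ ball c (ε * r)).Nonempty := fun c hc => by
    have hsub : ball c (ε * r) ⊆ ball x r := ball_subset_ball' (by linarith)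
    obtain ⟨y, hyc, hyU⟩ := ball_inter_nonempty_of_measure_ball_diff_lt μ hε hsub hr
    exact ⟨y, ⟨hsub hyc, hyU⟩, hyc⟩
  have hdiam := ofReal_le_ediam_image_of_norm_sub_le (w := t • v) happrox
    (hnonempty _ ((dist_self_add_left _ _).trans_le htv))
    (hnonempty _ ((dist_self_sub_left _ _).trans_le htv))
  refine le_trans (ENNReal.ofReal_le_ofReal ?_) hdiam
  rw [map_smul, norm_smul, Real.norm_of_nonneg ht]
  have hAv' : r * ((1 - ε) * (‖A‖ - η)) ≤ r * ((1 - ε) * ‖A v‖) := by gcongr; linarith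
  have hεA' : r * (ε * ‖A‖) ≤ r * η := by gcongr
  have hεη : 0 ≤ r * (ε * η) := by positivity
  rw [ht_def]
  linarith

theorem tendsto_ediam_image_ball_inter_div
    (hdens : Tendsto (fun r => μ (ball x r \ U) / μ (ball x r)) (𝓝[>] 0) (𝓝 0))
    (hdiff : Tendsto (fun y => ‖f y - f x - A (y - x)‖ / ‖y - x‖) (𝓝[U \ {x}] x) (𝓝 0)) :
    Tendsto (fun r => ediam (f '' (ball x r ∩ U)) / ENNReal.ofReal r) (𝓝[>] 0)
      (𝓝 (ENNReal.ofReal (2 * ‖A‖))) := by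
  refine ENNReal.tendsto_div_ofReal_nhdsGT_zero
    (fun δ hδ => eventually_ofReal_le_ediam_image_ball_inter μ hdens hdiff hδ) fun δ hδ => ?_
  filter_upwards [eventually_norm_sub_le_on_ball_inter hdiff (half_pos hδ)] with r happrox
  refine (ediam_image_le_of_norm_sub_le (fun y hy => ball_subset_closedBall hy.1) happrox).trans_eq
    (congrArg ENNReal.ofReal (by ring))

theorem pow_finrank_div_addHaar_ball (d : ℝ≥0∞) (x : E) {r : ℝ} (hr : 0 < r) :
    d ^ finrank ℝ E / μ (ball x r) = (d / ENNReal.ofReal r) ^ finrank ℝ E / μ (ball 0 1) := by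
  have hr' : ENNReal.ofReal r ^ finrank ℝ E ≠ 0 := pow_ne_zero _ (by simpa using hr)
  rw [addHaar_ball_of_pos μ x hr, ENNReal.ofReal_pow hr.le, div_eq_mul_inv, div_eq_mul_inv,
    div_eq_mul_inv, ENNReal.mul_inv (Or.inl hr') (Or.inl (by simp)), mul_pow, ENNReal.inv_pow,
    mul_assoc]

end Haar

theorem limsup_diam_pow_div_ball_general
    (f : En n → En n) (x : En n)
    (U : Set (En n)) (A : En n →L[ℝ] En n)
    (hdens : Tendsto (fun r : ℝ => volume (ball x r \ U) / volume (ball x r)) (𝓝[>] 0) (𝓝 0))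
    (hdiff : Tendsto (fun y => ‖f y - f x - A (y - x)‖ / ‖y - x‖) (𝓝[U \ {x}] x) (𝓝 0)) :
    Filter.limsup (fun r : ℝ => EMetric.diam (f '' (ball x r ∩ U)) ^ n / volume (ball x r))
        (𝓝[>] 0)
      = ENNReal.ofReal (2 ^ n * ‖A‖ ^ n) / volume (ball (0 : En n) 1) := by
  have hlim := ENNReal.Tendsto.div_const
    (ENNReal.Tendsto.pow (tendsto_ediam_image_ball_inter_div volume hdens hdiff) (n := n))
    (Or.inr (measure_ball_pos volume (0 : En n) one_pos).ne')
  have heq : (fun r : ℝ => ediam (f '' (ball x r ∩ U)) ^ n / volume (ball x r)) =ᶠ[𝓝[>] 0]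
      fun r => (ediam (f '' (ball x r ∩ U)) / ENNReal.ofReal r) ^ n / volume (ball (0 : En n) 1) := by
    filter_upwards [self_mem_nhdsWithin] with r hr
    simpa only [finrank_euclideanSpace_fin] using pow_finrank_div_addHaar_ball volume _ x hr
  rw [← mul_pow, ENNReal.ofReal_pow (by positivity)]
  exact (hlim.congr' heq.symm).limsup_eq

/-- If `f` is continuous on an open `Ω ∋ x`, `U ∋ x` has Lebesgue density 1 at `x`, and `f`
is differentiable at `x` relative to `U` with derivative `A`, then
`limsup_{r→0} diam f(B(x,r) ∩ U)ⁿ / |B(x,r)| = (2ⁿ/ω_n)‖A‖ⁿ`. -/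
theorem limsup_diam_pow_div_ball (hn : 2 ≤ n) (Ω : Set (En n)) (hΩ : IsOpen Ω)
    (f : En n → En n) (hf : ContinuousOn f Ω) (x : En n) (hx : x ∈ Ω)
    (U : Set (En n)) (hxU : x ∈ U) (A : En n →L[ℝ] En n)
    (hdens : Tendsto (fun r : ℝ => volume (ball x r \ U) / volume (ball x r)) (𝓝[>] 0) (𝓝 0))
    (hdiff : Tendsto (fun y => ‖f y - f x - A (y - x)‖ / ‖y - x‖) (𝓝[U \ {x}] x) (𝓝 0)) :
    Filter.limsup (fun r : ℝ => EMetric.diam (f '' (ball x r ∩ U)) ^ n / volume (ball x r))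
        (𝓝[>] 0)
      = ENNReal.ofReal (2 ^ n * ‖A‖ ^ n) / volume (ball (0 : En n) 1) :=
  limsup_diam_pow_div_ball_general f x U A hdens hdiff

end
end
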